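/- Let S ⊆ Δ, let γ₀ ∈ Δ \ S, set S′ = S ∪ {γ₀}, and let λ ∈ V. (i) If ⟨λ, pr_S(γ₀∨)⟩ ≥ 0, then for every γ ∈ Δ \ S′: ⟨λ, pr_{S′}(γ∨)⟩ < 0 implies ⟨λ, pr_S(γ∨)⟩ < 0, and ⟨λ, pr_{S′}(γ∨)⟩ ≤ 0 implies ⟨λ, pr_S(γ∨)⟩ ≤ 0. (ii) If ⟨λ, pr_S(γ₀∨)⟩ ≤ 0, then for every γ ∈ Δ \ S′: ⟨λ, pr_S(γ∨)⟩ < 0 implies ⟨λ, pr_{S′}(γ∨)⟩ < 0, and ⟨λ, pr_S(γ∨)⟩ ≤ 0 implies ⟨λ, pr_{S′}(γ∨)⟩ ≤ 0. -/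

import Mathlib

noncomputable section

open scoped RealInnerProductSpace

variable {V : Type*} [NormedAddCommGroup V] [InnerProductSpace ℝ V] [FiniteDimensional ℝ V]

/-- The reflection in the vector `γ` (as a function). -/
def sRefl (γ v : V) : V := v - (2 * ⟪v, γ⟫ / ⟪γ, γ⟫) • γ

/-- The coroot `γ∨ = 2γ/⟨γ,γ⟩` of `γ`. -/
def coroot (γ : V) : V := (2 / ⟪γ, γ⟫) • γ

/-- The Weyl group `W`: the subgroup of linear automorphisms generated by the
reflections in the roots. -/
def weylGroup (Φ : Finset V) : Subgroup (V ≃ₗ[ℝ] V) :=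
  Subgroup.closure {w : V ≃ₗ[ℝ] V | ∃ γ ∈ Φ, ∀ v, w v = sRefl γ v}

/-- `Φ_w = {γ ∈ Φ⁺ : w⁻¹ γ ∈ −Φ⁺}`. -/
def inversions (Φpos : Finset V) (w : V ≃ₗ[ℝ] V) : Set V :=
  {γ | γ ∈ Φpos ∧ -(w.symm γ) ∈ Φpos}

/-- `ℓ(w) = #Φ_w`. -/
def len (Φpos : Finset V) (w : V ≃ₗ[ℝ] V) : ℕ := (inversions Φpos w).ncard

/-- `Φ^P = Φ ∩ span(Δ^P)`. -/
def levi (Φ ΔP : Finset V) : Set V :=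
  {γ | γ ∈ Φ ∧ γ ∈ Submodule.span ℝ (ΔP : Set V)}

/-- `W_P = {w ∈ W : Φ_w ∩ Φ^P = ∅}`, the minimal length coset representatives of `W^P\W`. -/
def minimalCosetReps (Φ Φpos ΔP : Finset V) : Set (V ≃ₗ[ℝ] V) :=
  {w | w ∈ weylGroup Φ ∧ inversions Φpos w ∩ levi Φ ΔP = ∅}

/-- `pr_S`: the orthogonal projection onto the orthogonal complement of `span S`. -/
def pr (S : Set V) (v : V) : V :=
  (((Submodule.span ℝ S)ᗮ).orthogonalProjectionOnto v : V)

/-- `Φ` is a finite (possibly non-reduced) root system spanning `V`, with base `Δ`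
and associated positive system `Φpos`. -/
structure IsRootBase (Φ Δ Φpos : Finset V) : Prop where
  span_top : Submodule.span ℝ (Φ : Set V) = ⊤
  zero_not_mem : (0 : V) ∉ Φ
  refl_mem : ∀ γ ∈ Φ, ∀ δ ∈ Φ, sRefl γ δ ∈ Φ
  base_subset_pos : (Δ : Set V) ⊆ (Φpos : Set V)
  pos_subset : (Φpos : Set V) ⊆ (Φ : Set V)
  mem_or_neg_mem : ∀ γ ∈ Φ, γ ∈ Φpos ∨ -γ ∈ Φpos
  not_mem_and_neg_mem : ∀ γ ∈ Φpos, -γ ∉ Φpos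
  indep : LinearIndependent ℝ (fun x : (Δ : Set V) => (x : V))
  pos_comb : ∀ γ ∈ Φpos, ∃ c : V → ℝ, (∀ α ∈ Δ, 0 ≤ c α) ∧ γ = ∑ α ∈ Δ, c α • α

/-!
With `p = pr_S γ₀`, projecting away from `S ∪ {γ₀}` is projecting away from `S` and then
away from `p`, so
`⟪λ, pr_{S′} γ∨⟫ = ⟪λ, pr_S γ∨⟫ - ⟪p, pr_S γ∨⟫ / ‖p‖² · ⟪λ, p⟫`.
Distinct simple roots are obtuse, and the same formula shows inductively that their
projections away from any subset of `Δ` stay obtuse; hence `⟪p, pr_S γ∨⟫ ≤ 0`. Since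
`⟪λ, p⟫` has the sign of `⟪λ, pr_S γ₀∨⟫`, the two pairings differ in the required direction.
-/

namespace IsRootBase

variable {V : Type*} [NormedAddCommGroup V] [InnerProductSpace ℝ V] {Φ Δ Φpos : Finset V}

theorem exists_coeffs_of_mem (h : IsRootBase Φ Δ Φpos) {γ : V} (hγ : γ ∈ Φ) :
    ∃ c : V → ℝ, ((∀ α ∈ Δ, 0 ≤ c α) ∨ (∀ α ∈ Δ, c α ≤ 0)) ∧ γ = ∑ α ∈ Δ, c α • α := by
  rcases h.mem_or_neg_mem γ hγ with hpos | hneg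
  · obtain ⟨c, hc, rfl⟩ := h.pos_comb γ hpos
    exact ⟨c, Or.inl hc, rfl⟩
  · obtain ⟨c, hc, hsum⟩ := h.pos_comb (-γ) hneg
    refine ⟨-c, Or.inr fun α hα => neg_nonpos.mpr (hc α hα), ?_⟩
    simp only [Pi.neg_apply, neg_smul, Finset.sum_neg_distrib, ← hsum, neg_neg]

theorem ne_zero_of_mem_base (h : IsRootBase Φ Δ Φpos) {α : V} (hα : α ∈ Δ) : α ≠ 0 := by
  rintro rfl
  exact h.zero_not_mem (h.pos_subset (h.base_subset_pos hα))

/-- If `⟪α, β⟫ > 0`, the root `s_α β = β - k α` with `k > 0` would have coefficients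
of both signs. -/
theorem inner_nonpos_of_mem_base (h : IsRootBase Φ Δ Φpos) :
    (Δ : Set V).Pairwise fun α β => ⟪α, β⟫ ≤ 0 := by
  classical
  intro α (hα : α ∈ Δ) β (hβ : β ∈ Δ) hne
  by_contra! hpos
  have hαΦ : α ∈ Φ := h.pos_subset (h.base_subset_pos hα)
  have hβΦ : β ∈ Φ := h.pos_subset (h.base_subset_pos hβ)
  set k : ℝ := 2 * ⟪β, α⟫ / ⟪α, α⟫
  have hk : 0 < k := div_pos (by rw [real_inner_comm]; linarith)
    (real_inner_self_pos.mpr (h.ne_zero_of_mem_base hα))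
  obtain ⟨c, hsign, hc⟩ := h.exists_coeffs_of_mem (h.refl_mem α hαΦ β hβΦ)
  set e : V → ℝ := fun δ => (if δ = β then 1 else 0) - (if δ = α then k else 0)
  have he : sRefl α β = ∑ δ ∈ Δ, e δ • δ := by
    simp [e, sRefl, k, sub_smul, ite_smul, Finset.sum_sub_distrib, hα, hβ]
  have hind : LinearIndepOn ℝ id (Δ : Set V) := h.indep
  have hce := linearIndepOn_finset_iffₛ.mp hind c e (by simpa [← hc] using he)
  have hcα : c α = -k := by simpa [e, hne] using hce α hα
  have hcβ : c β = 1 := by simpa [e, Ne.symm hne] using hce β hβ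
  rcases hsign with hnonneg | hnonpos
  · linarith [hnonneg α hα]
  · linarith [hnonpos β hβ]

end IsRootBase

section Projection

variable {V : Type*} [NormedAddCommGroup V] [InnerProductSpace ℝ V] [FiniteDimensional ℝ V]

open Submodule

theorem pr_mem_orthogonal (S : Set V) (v : V) : pr S v ∈ (span ℝ S)ᗮ :=
  ((span ℝ S)ᗮ.orthogonalProjectionOnto v).2

theorem pr_eq_sub_starProjection (S : Set V) (v : V) :
    pr S v = v - (span ℝ S).starProjection v :=
  starProjection_orthogonal_val v

theorem sub_pr_mem_span (S : Set V) (v : V) : v - pr S v ∈ span ℝ S := by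
  rw [pr_eq_sub_starProjection, sub_sub_cancel]
  exact starProjection_apply_mem _ v

theorem pr_eq_of_mem_orthogonal {S : Set V} {v w : V} (hw : w ∈ (span ℝ S)ᗮ)
    (hvw : v - w ∈ span ℝ S) : pr S v = w :=
  eq_starProjection_of_mem_orthogonal hw (by rwa [orthogonal_orthogonal])

theorem pr_empty (v : V) : pr ∅ v = v := by
  simp [pr_eq_sub_starProjection]

theorem pr_smul (S : Set V) (c : ℝ) (v : V) : pr S (c • v) = c • pr S v := by
  simp [pr]

theorem pr_singleton (p w : V) : pr {p} w = w - (⟪p, w⟫ / ‖p‖ ^ 2) • p := by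
  rw [pr_eq_sub_starProjection, starProjection_singleton]
  rfl

theorem inner_pr_singleton (p a b : V) :
    ⟪pr {p} a, pr {p} b⟫ = ⟪a, b⟫ - ⟪p, a⟫ * ⟪p, b⟫ / ‖p‖ ^ 2 := by
  rcases eq_or_ne p 0 with rfl | hp
  · simp [pr_singleton]
  have hp2 : ‖p‖ ^ 2 ≠ 0 := by positivity
  simp only [pr_singleton, inner_sub_left, inner_sub_right, real_inner_smul_left,
    real_inner_smul_right, real_inner_self_eq_norm_sq, real_inner_comm p]
  field_simp
  ring

theorem pr_insert (u : V) (S : Set V) (v : V) : pr (insert u S) v = pr {pr S u} (pr S v) := by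
  set p := pr S u
  set x := pr {p} (pr S v)
  have hp : p ∈ (span ℝ S)ᗮ := pr_mem_orthogonal S u
  have hx_eq : x = pr S v - (⟪p, pr S v⟫ / ‖p‖ ^ 2) • p := pr_singleton p (pr S v)
  have hxS : x ∈ (span ℝ S)ᗮ := by
    rw [hx_eq]
    exact sub_mem (pr_mem_orthogonal S v) (smul_mem _ _ hp)
  have hxu : ⟪u, x⟫ = 0 := by
    have hpx : ⟪p, x⟫ = 0 := by
      simpa using (pr_mem_orthogonal {p} (pr S v)) p (mem_span_singleton_self p)
    rw [← sub_add_cancel u p, inner_add_left, hpx, add_zero]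
    exact inner_right_of_mem_orthogonal (sub_pr_mem_span S u) hxS
  have hmono : span ℝ S ≤ span ℝ (insert u S) := span_mono (Set.subset_insert u S)
  apply pr_eq_of_mem_orthogonal
  · rw [span_insert, ← inf_orthogonal]
    exact ⟨(mem_orthogonal_singleton_iff_inner_right).mpr hxu, hxS⟩
  · have hp_mem : p ∈ span ℝ (insert u S) := by
      rw [← sub_sub_cancel u p]
      exact sub_mem (subset_span (Set.mem_insert u S)) (hmono (sub_pr_mem_span S u))
    rw [hx_eq, ← sub_add]
    exact add_mem (hmono (sub_pr_mem_span S v)) (smul_mem _ _ hp_mem)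

theorem pairwise_inner_pr_nonpos {A S : Set V} (hA : A.Pairwise fun x y => ⟪x, y⟫ ≤ 0)
    (hS : S.Finite) (hSA : S ⊆ A) : (A \ S).Pairwise fun x y => ⟪pr S x, pr S y⟫ ≤ 0 := by
  induction S, hS using Set.Finite.induction_on with
  | empty => simpa [pr_empty] using hA
  | @insert u S huS _ ih =>
    have ih := ih ((Set.subset_insert u S).trans hSA)
    have hu : u ∈ A \ S := ⟨hSA (Set.mem_insert u S), huS⟩
    rintro α ⟨hαA, hαuS⟩ β ⟨hβA, hβuS⟩ hne
    rw [Set.mem_insert_iff, not_or] at hαuS hβuS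
    have hα : α ∈ A \ S := ⟨hαA, hαuS.2⟩
    have hβ : β ∈ A \ S := ⟨hβA, hβuS.2⟩
    rw [pr_insert, pr_insert, inner_pr_singleton]
    have huα := ih hu hα (Ne.symm hαuS.1)
    have huβ := ih hu hβ (Ne.symm hβuS.1)
    have : 0 ≤ ⟪pr S u, pr S α⟫ * ⟪pr S u, pr S β⟫ / ‖pr S u‖ ^ 2 :=
      div_nonneg (mul_nonneg_of_nonpos_of_nonpos huα huβ) (sq_nonneg _)
    linarith [ih hα hβ hne]

end Projection

theorem IsRootBase.pairwise_inner_pr_nonpos {V : Type*} [NormedAddCommGroup V]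
    [InnerProductSpace ℝ V] [FiniteDimensional ℝ V] {Φ Δ Φpos : Finset V}
    (h : IsRootBase Φ Δ Φpos) {S : Set V} (hS : S ⊆ Δ) :
    ((Δ : Set V) \ S).Pairwise fun x y => ⟪pr S x, pr S y⟫ ≤ 0 :=
  _root_.pairwise_inner_pr_nonpos h.inner_nonpos_of_mem_base (Δ.finite_toSet.subset hS) hS

/-- Lemma 19.2 of the paper in the essential case
`#Δ_P^{P′} = 1`. Let `S ⊆ Δ`, `γ₀ ∈ Δ \ S`, `S′ = S ∪ {γ₀}` and `λ ∈ V`.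
(i) If `⟨λ, pr_S(γ₀∨)⟩ ≥ 0` then for every `γ ∈ Δ \ S′`:
`⟨λ, pr_{S′}(γ∨)⟩ < 0 → ⟨λ, pr_S(γ∨)⟩ < 0` and
`⟨λ, pr_{S′}(γ∨)⟩ ≤ 0 → ⟨λ, pr_S(γ∨)⟩ ≤ 0`.
(ii) If `⟨λ, pr_S(γ₀∨)⟩ ≤ 0` then for every `γ ∈ Δ \ S′`:
`⟨λ, pr_S(γ∨)⟩ < 0 → ⟨λ, pr_{S′}(γ∨)⟩ < 0` and
`⟨λ, pr_S(γ∨)⟩ ≤ 0 → ⟨λ, pr_{S′}(γ∨)⟩ ≤ 0`. -/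
theorem restrictedCorootMonotonicity
    {V : Type*} [NormedAddCommGroup V] [InnerProductSpace ℝ V] [FiniteDimensional ℝ V]
    (Φ Δ Φpos : Finset V) (h : IsRootBase Φ Δ Φpos)
    (S : Set V) (hS : S ⊆ (Δ : Set V))
    (γ₀ : V) (hγ₀ : γ₀ ∈ (Δ : Set V) \ S)
    (lam : V) :
    (0 ≤ ⟪lam, pr S (coroot γ₀)⟫ →
      ∀ γ ∈ (Δ : Set V) \ (S ∪ {γ₀}),
        (⟪lam, pr (S ∪ {γ₀}) (coroot γ)⟫ < 0 → ⟪lam, pr S (coroot γ)⟫ < 0) ∧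
        (⟪lam, pr (S ∪ {γ₀}) (coroot γ)⟫ ≤ 0 → ⟪lam, pr S (coroot γ)⟫ ≤ 0)) ∧
    (⟪lam, pr S (coroot γ₀)⟫ ≤ 0 →
      ∀ γ ∈ (Δ : Set V) \ (S ∪ {γ₀}),
        (⟪lam, pr S (coroot γ)⟫ < 0 → ⟪lam, pr (S ∪ {γ₀}) (coroot γ)⟫ < 0) ∧
        (⟪lam, pr S (coroot γ)⟫ ≤ 0 → ⟪lam, pr (S ∪ {γ₀}) (coroot γ)⟫ ≤ 0)) := by
  obtain ⟨hγ₀Δ, hγ₀S⟩ := hγ₀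
  set p := pr S γ₀
  have hc₀ : 0 < 2 / ⟪γ₀, γ₀⟫ :=
    div_pos two_pos (real_inner_self_pos.mpr (h.ne_zero_of_mem_base hγ₀Δ))
  have hscale : ⟪lam, pr S (coroot γ₀)⟫ = 2 / ⟪γ₀, γ₀⟫ * ⟪lam, p⟫ := by
    rw [coroot, pr_smul, real_inner_smul_right]
  have hshift : ∀ γ ∈ (Δ : Set V) \ (S ∪ {γ₀}), ∃ t : ℝ, 0 ≤ t ∧
      ⟪lam, pr (S ∪ {γ₀}) (coroot γ)⟫ = ⟪lam, pr S (coroot γ)⟫ + t * ⟪lam, p⟫ := by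
    rintro γ ⟨hγΔ, hγS₀⟩
    rw [Set.mem_union, Set.mem_singleton_iff, not_or] at hγS₀
    have hobtuse : ⟪p, pr S γ⟫ ≤ 0 :=
      h.pairwise_inner_pr_nonpos hS ⟨hγ₀Δ, hγ₀S⟩ ⟨hγΔ, hγS₀.1⟩ (Ne.symm hγS₀.2)
    refine ⟨-(⟪p, pr S (coroot γ)⟫ / ‖p‖ ^ 2), ?_, ?_⟩
    · rw [coroot, pr_smul, real_inner_smul_right, neg_nonneg]
      exact div_nonpos_of_nonpos_of_nonneg
        (mul_nonpos_of_nonneg_of_nonpos (div_nonneg zero_le_two real_inner_self_nonneg) hobtuse)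
        (sq_nonneg _)
    · rw [Set.union_singleton, pr_insert, pr_singleton, inner_sub_right, real_inner_smul_right]
      ring
  rw [hscale]
  refine ⟨fun h₀ γ hγ => ?_, fun h₀ γ hγ => ?_⟩ <;> obtain ⟨t, ht, heq⟩ := hshift γ hγ <;>
    rw [heq]
  · have : 0 ≤ t * ⟪lam, p⟫ := mul_nonneg ht (nonneg_of_mul_nonneg_right h₀ hc₀)
    constructor <;> intro <;> linarith
  · have : t * ⟪lam, p⟫ ≤ 0 :=
      mul_nonpos_of_nonneg_of_nonpos ht (nonpos_of_mul_nonpos_right h₀ hc₀)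
    constructor <;> intro <;> linarith
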